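/- arXiv:2309.12472 — 3 statements merged into one kernel-verified Lean document; each statement's English description precedes it below -/
import Mathlib

section
/- Let A be a C*-algebra, I a closed two-sided ideal of A, and J a closed two-sided ideal containing a full element. Then I ⋐ J if and only if for every increasing sequence of ideals (I_n) with J contained in the closure of their union, there exists n with I ⊆ I_n. In other words, on ideals with a full element, compact containment coincides with the sequential way-below relation. -/
/-- `I ⋐ J`: whenever `J` is contained in the closed sum of a family of closed two-sided
ideals, `I` is contained in a finite subsum. -/
def CompactlyContained {A : Type*} [NonUnitalCStarAlgebra A]
    (I J : TwoSidedIdeal A) : Prop :=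
  ∀ {Λ : Type} (f : Λ → TwoSidedIdeal A), (∀ l, IsClosed (f l : Set A)) →
    (J : Set A) ⊆ closure ((⨆ l, f l : TwoSidedIdeal A) : Set A) →
    ∃ s : Finset Λ, (I : Set A) ⊆ ((s.sup f : TwoSidedIdeal A) : Set A)

/-- The closed two-sided ideal of `A` generated by a set. -/
def genClosedIdeal {A : Type*} [NonUnitalCStarAlgebra A] (s : Set A) : TwoSidedIdeal A :=
  sInf {J : TwoSidedIdeal A | IsClosed (J : Set A) ∧ s ⊆ J}

/-!
Given a full element `a` of `J` and closed ideals `f l` whose sum is dense in `J`, approximate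
`a` by elements of finite subsums; along an increasing sequence of finite index sets these
subsums form an increasing sequence of ideals whose union is dense in the closed ideal generated
by `a`, which is `J`. The sequential condition applies once these finite subsums are known to be
closed, i.e. once the sum of two closed ideals `I`, `K` of a C⋆-algebra is closed. For `x ∈ I`
the element `e = h g(h)`, `h = x x⋆`, lies in `I`, satisfies `‖z - e z‖ ≤ ‖z‖` and almost fixes
`x`; so every `y ∈ K` is as close to `I ⊓ K` as to `I`. Hence every point of the image of `K` in
`A ⧸ I` lifts to `K` with controlled norm, the image is closed, and so is its preimage `I ⊔ K`.
-/

lemma abs_mul_inv_one_add_sq_mul_sq_le {u : ℝ} (hu : 0 < u) (s : ℝ) :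
    |s| * (1 + u ^ 2 * s ^ 2)⁻¹ ≤ (2 * u)⁻¹ := by
  rw [← div_eq_mul_inv, div_le_iff₀ (by positivity), inv_mul_eq_div, le_div_iff₀ (by positivity)]
  nlinarith [sq_nonneg (u * |s| - 1), sq_abs s]

theorem exists_monotone_mem_closure_iUnion {X ι : Type*} [TopologicalSpace X]
    [FrechetUrysohnSpace X] [SemilatticeSup ι] {S : ι → Set X} (hS : Monotone S) {a : X}
    (ha : a ∈ closure (⋃ i, S i)) : ∃ φ : ℕ → ι, Monotone φ ∧ a ∈ closure (⋃ n, S (φ n)) := by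
  obtain ⟨b, hb, hba⟩ := mem_closure_iff_seq_limit.mp ha
  choose i hi using fun n => Set.mem_iUnion.mp (hb n)
  exact ⟨partialSups i, (partialSups i).monotone, mem_closure_of_tendsto hba <|
    .of_forall fun n => Set.mem_iUnion.mpr ⟨n, hS (le_partialSups i n) (hi n)⟩⟩

theorem AddSubgroup.isClosed_sup_of_forall_exists_norm_sub_le {E : Type*} [NormedAddCommGroup E]
    [CompleteSpace E] {I K : AddSubgroup E} (hI : IsClosed (I : Set E))
    (hK : IsClosed (K : Set E))
    (h : ∀ y ∈ K, ∀ x ∈ I, ∀ δ > 0, ∃ c ∈ I ⊓ K, ‖y - c‖ ≤ ‖y - x‖ + δ) :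
    IsClosed ((I ⊔ K : AddSubgroup E) : Set E) := by
  -- makes `E ⧸ I` a normed group, not just a seminormed one
  have := hI
  have := hK.completeSpace_coe
  let f : NormedAddGroupHom K (E ⧸ I) := I.normedMk.comp (NormedAddGroupHom.incl K)
  have hf_apply (y : K) : f y = ((y : E) : E ⧸ I) := rfl
  have hf : f.SurjectiveOnWith f.range 2 := by
    rintro _ ⟨y, rfl⟩
    rcases eq_or_ne (f y) 0 with hy | hy
    · exact ⟨0, by change f 0 = f y; rw [hy, map_zero], by simp⟩
    have hε : 0 < ‖f y‖ / 2 := by positivity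
    obtain ⟨m, hmy, hm⟩ := QuotientAddGroup.exists_norm_mk_lt (f y) hε
    have hx : (y : E) - m ∈ I := by
      rwa [hf_apply, QuotientAddGroup.eq_iff_sub_mem, ← neg_mem_iff, neg_sub] at hmy
    obtain ⟨c, ⟨hcI, hcK⟩, hc⟩ := h y y.2 _ hx _ hε
    refine ⟨⟨y - c, sub_mem y.2 hcK⟩, ?_, ?_⟩
    · change f _ = f y
      rw [hf_apply, hf_apply, QuotientAddGroup.eq_iff_sub_mem]
      simpa using hcI
    · rw [sub_sub_cancel] at hc
      change ‖(y : E) - c‖ ≤ 2 * ‖f y‖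
      linarith
  have hrange : IsClosed (f.range : Set (E ⧸ I)) := by
    refine isClosed_of_closure_subset fun q hq => ?_
    obtain ⟨g, hg, -⟩ := controlled_closure_of_complete two_pos one_pos hf q hq
    exact ⟨g, hg⟩
  have hsup : ((I ⊔ K : AddSubgroup E) : Set E) =
      (QuotientAddGroup.mk : E → E ⧸ I) ⁻¹' f.range := by
    ext z
    simp only [SetLike.mem_coe, AddSubgroup.mem_sup, Set.mem_preimage, NormedAddGroupHom.mem_range,
      hf_apply, QuotientAddGroup.eq_iff_sub_mem, Subtype.exists, exists_prop]
    constructor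
    · rintro ⟨x, hx, y, hy, rfl⟩
      exact ⟨y, hy, by simpa using neg_mem hx⟩
    · rintro ⟨y, hy, hyz⟩
      exact ⟨z - y, by simpa using neg_mem hyz, y, hy, sub_add_cancel z y⟩
  rw [hsup]
  exact hrange.preimage continuous_quot_mk

namespace TwoSidedIdeal

variable {R : Type*} [NonUnitalNonAssocRing R]

theorem coe_iSup_of_directed {ι : Type*} [Nonempty ι] {f : ι → TwoSidedIdeal R}
    (hf : Directed (· ≤ ·) f) : ((⨆ i, f i : TwoSidedIdeal R) : Set R) = ⋃ i, (f i : Set R) := by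
  let U : TwoSidedIdeal R := .mk' (⋃ i, (f i : Set R))
    (Set.mem_iUnion.mpr ⟨Classical.arbitrary ι, (f _).zero_mem⟩)
    (by
      simp only [Set.mem_iUnion, SetLike.mem_coe]
      rintro x y ⟨i, hx⟩ ⟨j, hy⟩
      obtain ⟨k, hik, hjk⟩ := hf i j
      exact ⟨k, (f k).add_mem (hik hx) (hjk hy)⟩)
    (by
      simp only [Set.mem_iUnion, SetLike.mem_coe]
      rintro x ⟨i, hx⟩
      exact ⟨i, (f i).neg_mem hx⟩)
    (by
      simp only [Set.mem_iUnion, SetLike.mem_coe]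
      rintro x y ⟨i, hy⟩
      exact ⟨i, (f i).mul_mem_left x y hy⟩)
    (by
      simp only [Set.mem_iUnion, SetLike.mem_coe]
      rintro x y ⟨i, hx⟩
      exact ⟨i, (f i).mul_mem_right x y hx⟩)
  have hU : (⨆ i, f i) ≤ U :=
    iSup_le fun i x hx => (mem_mk' ..).mpr (Set.mem_iUnion.mpr ⟨i, hx⟩)
  exact subset_antisymm (fun x hx => (mem_mk' ..).mp (hU hx))
    (Set.iUnion_subset fun i => le_iSup f i)

theorem coe_iSup_eq_iUnion_finset_sup {ι : Type*} [DecidableEq ι] (f : ι → TwoSidedIdeal R) :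
    ((⨆ i, f i : TwoSidedIdeal R) : Set R) =
      ⋃ s : Finset ι, ((s.sup f : TwoSidedIdeal R) : Set R) := by
  simp_rw [iSup_eq_iSup_finset f, ← Finset.sup_eq_iSup]
  exact coe_iSup_of_directed (Monotone.directed_le fun s t hst => Finset.sup_mono hst)

variable [TopologicalSpace R] [IsTopologicalRing R]

def topologicalClosure (I : TwoSidedIdeal R) : TwoSidedIdeal R :=
  .mk' (closure I) (subset_closure I.zero_mem)
    (fun hx hy => map_mem_closure₂ continuous_add hx hy fun _ ha _ hb => I.add_mem ha hb)
    (fun hx => map_mem_closure continuous_neg hx fun _ ha => I.neg_mem ha)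
    (fun {x _} hy => map_mem_closure (continuous_const_mul x) hy fun _ ha => I.mul_mem_left x _ ha)
    (fun {_ y} hx => map_mem_closure (f := (· * y)) (continuous_mul_const y) hx
      fun _ ha => I.mul_mem_right _ y ha)

@[simp]
theorem coe_topologicalClosure (I : TwoSidedIdeal R) :
    (I.topologicalClosure : Set R) = closure I :=
  coe_mk' _ _ _ _ _ _

end TwoSidedIdeal

lemma Unitization.inr_sub_mul_self {R A : Type*} [CommRing R] [NonUnitalRing A] [Module R A]
    (e z : A) : ((z - e * z : A) : Unitization R A) = (1 - (e : Unitization R A)) * z := by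
  rw [Unitization.inr_sub, Unitization.inr_mul, sub_mul, one_mul]

open scoped CStarAlgebra

section CStarAlgebra

variable {A : Type*} [NonUnitalCStarAlgebra A]

namespace TwoSidedIdeal

theorem exists_mem_norm_sub_mul_le (I : TwoSidedIdeal A) {x : A} (hx : x ∈ I)
    {δ : ℝ} (hδ : 0 < δ) :
    ∃ e ∈ I, (∀ z : A, ‖z - e * z‖ ≤ ‖z‖) ∧ ‖x - e * x‖ ≤ δ := by
  -- chosen so that `|s| * w s ≤ (2 * u)⁻¹ = δ ^ 2`
  set u : ℝ := (2 * δ ^ 2)⁻¹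
  have hu : 0 < u := by positivity
  set w : ℝ → ℝ := fun s => (1 + u ^ 2 * s ^ 2)⁻¹
  have hw : Continuous w := by fun_prop (disch := intro s; positivity)
  have hw_pos (s : ℝ) : 0 < w s := by positivity
  have hw_le_one (s : ℝ) : w s ≤ 1 := inv_le_one_of_one_le₀ (by simp; positivity)
  set g : ℝ → ℝ := fun s => u ^ 2 * s * w s
  have hg : Continuous g := by fun_prop
  set h : A := x * star x
  have hh : IsSelfAdjoint (h : A⁺¹) := Unitization.isSelfAdjoint_inr.mpr (.mul_star_self x)
  set e : A := h * cfcₙ g h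
  have h_one_sub : 1 - (e : A⁺¹) = cfc w (h : A⁺¹) := by
    rw [Unitization.inr_mul, Unitization.real_cfcₙ_eq_cfc_inr _ g (by simp [g])]
    nth_rw 1 [← cfc_id' ℝ (h : A⁺¹)]
    rw [← cfc_mul _ _ _ (by fun_prop) hg.continuousOn, ← cfc_const_one ℝ (h : A⁺¹),
      ← cfc_sub _ _ _ (by fun_prop) (by fun_prop)]
    refine cfc_congr fun s _ => ?_
    simp only [w, g]
    field_simp
    ring
  refine ⟨e, I.mul_mem_right _ _ (I.mul_mem_right _ _ hx), fun z => ?_, ?_⟩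
  · rw [← Unitization.norm_inr (𝕜 := ℂ), Unitization.inr_sub_mul_self, h_one_sub]
    calc ‖cfc w (h : A⁺¹) * z‖ ≤ ‖cfc w (h : A⁺¹)‖ * ‖(z : A⁺¹)‖ := norm_mul_le _ _
      _ ≤ 1 * ‖(z : A⁺¹)‖ := by
        gcongr
        exact norm_cfc_le zero_le_one fun s _ => by
          rw [Real.norm_eq_abs, abs_of_pos (hw_pos s)]; exact hw_le_one s
      _ = ‖z‖ := by rw [one_mul, Unitization.norm_inr]
  · have hW : star (cfc w (h : A⁺¹)) = cfc w (h : A⁺¹) := (cfc_predicate w (h : A⁺¹)).star_eq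
    have hWHW : cfc w (h : A⁺¹) * x * star (cfc w (h : A⁺¹) * x) =
        cfc (fun s => w s * s * w s) (h : A⁺¹) := by
      rw [star_mul, hW, ← Unitization.inr_star, mul_assoc, ← mul_assoc (x : A⁺¹),
        ← Unitization.inr_mul, ← mul_assoc, cfc_mul _ _ _ (by fun_prop) (by fun_prop),
        cfc_mul _ _ _ (by fun_prop) (by fun_prop), cfc_id' ℝ (h : A⁺¹)]
    have hbound : ‖cfc (fun s => w s * s * w s) (h : A⁺¹)‖ ≤ δ ^ 2 := by
      refine norm_cfc_le (by positivity) fun s _ => ?_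
      calc ‖w s * s * w s‖ = w s * (|s| * w s) := by
            rw [Real.norm_eq_abs, abs_mul, abs_mul, abs_of_pos (hw_pos s), mul_assoc]
        _ ≤ 1 * (2 * u)⁻¹ := by
          gcongr
          · exact hw_le_one s
          · exact abs_mul_inv_one_add_sq_mul_sq_le hu s
        _ = δ ^ 2 := by simp only [u]; field_simp
    rw [← sq_le_sq₀ (norm_nonneg _) hδ.le, ← Unitization.norm_inr (𝕜 := ℂ),
      Unitization.inr_sub_mul_self, h_one_sub, sq, ← CStarRing.norm_self_mul_star, hWHW]
    exact hbound

theorem exists_mem_inf_norm_sub_le (I K : TwoSidedIdeal A) {x y : A} (hx : x ∈ I)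
    (hy : y ∈ K) {δ : ℝ} (hδ : 0 < δ) : ∃ c ∈ I ⊓ K, ‖y - c‖ ≤ ‖y - x‖ + δ := by
  obtain ⟨e, heI, he_le_norm, he_x⟩ := I.exists_mem_norm_sub_mul_le hx hδ
  refine ⟨e * y, ⟨I.mul_mem_right _ _ heI, K.mul_mem_left _ _ hy⟩, ?_⟩
  calc ‖y - e * y‖ = ‖((y - x) - e * (y - x)) + (x - e * x)‖ := by congr 1; noncomm_ring
    _ ≤ ‖(y - x) - e * (y - x)‖ + ‖x - e * x‖ := norm_add_le _ _
    _ ≤ ‖y - x‖ + δ := add_le_add (he_le_norm _) he_x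

theorem isClosed_coe_sup {I K : TwoSidedIdeal A} (hI : IsClosed (I : Set A))
    (hK : IsClosed (K : Set A)) : IsClosed ((I ⊔ K : TwoSidedIdeal A) : Set A) := by
  convert AddSubgroup.isClosed_sup_of_forall_exists_norm_sub_le (I := .ofClass I)
    (K := .ofClass K) hI hK fun y hy x hx δ hδ => I.exists_mem_inf_norm_sub_le K hx hy hδ using 1
  ext
  simp only [SetLike.mem_coe, TwoSidedIdeal.mem_sup, AddSubgroup.mem_sup]
  rfl

theorem isClosed_coe_finset_sup {ι : Type*} {f : ι → TwoSidedIdeal A}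
    (hf : ∀ i, IsClosed (f i : Set A)) (s : Finset ι) :
    IsClosed ((s.sup f : TwoSidedIdeal A) : Set A) := by
  induction s using Finset.cons_induction with
  | empty => simp
  | cons i s _ ih => simpa only [Finset.sup_cons] using isClosed_coe_sup (hf i) ih

end TwoSidedIdeal

lemma genClosedIdeal_le {s : Set A} {K : TwoSidedIdeal A} (hK : IsClosed (K : Set A))
    (hs : s ⊆ K) : genClosedIdeal s ≤ K :=
  sInf_le ⟨hK, hs⟩

end CStarAlgebra

theorem compactlyContained_iff_seq_general {A : Type*} [NonUnitalCStarAlgebra A]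
    (I J : TwoSidedIdeal A)
    (hfull : ∃ a ∈ J, genClosedIdeal {a} = J) :
    CompactlyContained I J ↔
      ∀ f : ℕ → TwoSidedIdeal A, (∀ n, IsClosed (f n : Set A)) → Monotone f →
        (J : Set A) ⊆ closure (⋃ n, (f n : Set A)) → ∃ n, I ≤ f n := by
  constructor
  · intro hIJ f hf hmono hJ
    rw [← TwoSidedIdeal.coe_iSup_of_directed hmono.directed_le] at hJ
    obtain ⟨s, hs⟩ := hIJ f hf hJ
    exact ⟨s.sup id, hs.trans (Finset.sup_le fun n hn => hmono (Finset.le_sup (f := id) hn))⟩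
  · intro hseq Λ f hf hJ
    classical
    obtain ⟨a, haJ, rfl⟩ := hfull
    rw [TwoSidedIdeal.coe_iSup_eq_iUnion_finset_sup] at hJ
    obtain ⟨φ, hφ, ha⟩ := exists_monotone_mem_closure_iUnion
      (fun s t hst => Finset.sup_mono (f := f) hst) (hJ haJ)
    let G n := (φ n).sup f
    have hG : Monotone G := fun m n hmn => Finset.sup_mono (hφ hmn)
    have hJG : genClosedIdeal {a} ≤ (⨆ n, G n).topologicalClosure := by
      refine genClosedIdeal_le (by simp) ?_
      simpa [TwoSidedIdeal.coe_iSup_of_directed hG.directed_le] using ha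
    obtain ⟨n, hn⟩ := hseq G (fun n => TwoSidedIdeal.isClosed_coe_finset_sup hf _) hG
      (by simpa [TwoSidedIdeal.coe_iSup_of_directed hG.directed_le] using
        TwoSidedIdeal.le_iff.mp hJG)
    exact ⟨φ n, hn⟩

/-- On closed ideals containing a full element, compact containment coincides with the
sequential way-below relation: `I ⋐ J` iff for every increasing sequence of closed ideals
`(I_n)` with `J` contained in the closure of their union there is `n` with `I ⊆ I_n`. -/
theorem compactlyContained_iff_seq {A : Type*} [NonUnitalCStarAlgebra A]
    (I J : TwoSidedIdeal A) (hI : IsClosed (I : Set A)) (hJ : IsClosed (J : Set A))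
    (hfull : ∃ a ∈ J, genClosedIdeal {a} = J) :
    CompactlyContained I J ↔
      ∀ f : ℕ → TwoSidedIdeal A, (∀ n, IsClosed (f n : Set A)) → Monotone f →
        (J : Set A) ⊆ closure (⋃ n, (f n : Set A)) → ∃ n, I ≤ f n :=
  compactlyContained_iff_seq_general I J hfull
end

section
/- Let α : G → Aut(A) be a strongly continuous action of a topological group G on a C*-algebra A. Then the induced action α♯ of G on the primitive ideal space Prim(A), given by α♯_g(p) = α_g(p), is jointly continuous with respect to the Jacobson (hull-kernel) topology: for every open U ⊆ Prim(A), the set {(g,p) ∈ G × Prim(A) : α♯_g(p) ∈ U} is open in the product topology. -/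
/-!
If `b ∉ p₀ = ker π₀` and `0 < ε < ‖π₀ b‖`, then `c = f(b⋆b)` with `f(t) = max (t - ε²) 0`
satisfies `π c = 0 ↔ ‖π b‖ ≤ ε` for every representation `π`, so the hull-kernel open set
`{p | c ∉ p}` is a neighbourhood of `p₀` on which `b` stays at distance `> ε` from `p`.
If `a = α_{g₀} b ∉ α_{g₀}(p₀)` and `a = α_g x` with `x ∈ p`, then `‖α_g b - a‖ = ‖b - x‖ > ε`
since `α_g` is isometric; norm continuity of `g ↦ α_g b` therefore keeps `a` outside `α_g(p)`
for `(g, p)` near `(g₀, p₀)`.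
-/

/-- A two-sided ideal of a C*-algebra is primitive if it is the kernel of a non-zero
(topologically) irreducible `*`-representation on a complex Hilbert space. -/
def IsPrimitiveIdeal {A : Type u} [NonUnitalCStarAlgebra A] (p : TwoSidedIdeal A) : Prop :=
  ∃ (H : Type u) (_ : NormedAddCommGroup H) (_ : InnerProductSpace ℂ H) (_ : CompleteSpace H)
    (π : A →⋆ₙₐ[ℂ] (H →L[ℂ] H)), π ≠ 0 ∧
      (∀ S : Submodule ℂ H, IsClosed (S : Set H) → (∀ a x, x ∈ S → π a x ∈ S) →
        S = ⊥ ∨ S = ⊤) ∧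
      ∀ a, a ∈ p ↔ π a = 0

/-- The primitive ideal space of a C*-algebra. -/
abbrev PrimIdeal (A : Type u) [NonUnitalCStarAlgebra A] : Type u :=
  {p : TwoSidedIdeal A // IsPrimitiveIdeal p}

/-- The Jacobson (hull-kernel) topology on the primitive ideal space: open sets are generated
by the sets `{p | ¬ I ≤ p}` for ideals `I`. -/
instance {A : Type u} [NonUnitalCStarAlgebra A] : TopologicalSpace (PrimIdeal A) :=
  TopologicalSpace.generateFrom
    {U : Set (PrimIdeal A) | ∃ I : TwoSidedIdeal A, U = {p | ¬ I ≤ p.1}}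

open Filter Topology
open scoped CStarAlgebra

lemma cfc_max_sub_eq_zero_iff {B : Type*} [CStarAlgebra B] [PartialOrder B] [StarOrderedRing B]
    {a : B} (ha : 0 ≤ a) {r : ℝ} (hr : 0 ≤ r) :
    cfc (fun t : ℝ => max (t - r) 0) a = 0 ↔ ‖a‖ ≤ r := by
  rw [CStarAlgebra.norm_le_iff_le_algebraMap a hr, le_algebraMap_iff_spectrum_le,
    ← cfc_zero ℝ a, cfc_eq_cfc_iff_eqOn]
  simp [Set.EqOn]

lemma NonUnitalStarAlgHom.map_cfcₙ_max_sub_sq_eq_zero_iff {A B : Type*} [NonUnitalCStarAlgebra A]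
    [CStarAlgebra B] [PartialOrder B] [StarOrderedRing B] (π : A →⋆ₙₐ[ℂ] B) (b : A) {ε : ℝ}
    (hε : 0 ≤ ε) :
    π (cfcₙ (fun t : ℝ => max (t - ε ^ 2) 0) (star b * b)) = 0 ↔ ‖π b‖ ≤ ε := by
  have hb : IsSelfAdjoint (star b * b) := .star_mul_self b
  rw [π.map_cfcₙ _ _ (by fun_prop) (by simp [sq_nonneg]) (map_continuous π) hb (hb.map π),
    map_mul, map_star,
    cfcₙ_eq_cfc (by fun_prop) (by simp [sq_nonneg]),
    cfc_max_sub_eq_zero_iff (star_mul_self_nonneg _) (sq_nonneg ε),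
    CStarRing.norm_star_mul_self, ← sq, sq_le_sq₀ (norm_nonneg _) hε]

namespace PrimIdeal

variable {A : Type*} [NonUnitalCStarAlgebra A]

lemma isOpen_setOf_notMem (c : A) : IsOpen {p : PrimIdeal A | c ∉ p.1} := by
  refine TopologicalSpace.isOpen_generateFrom_of_mem ⟨TwoSidedIdeal.span {c}, ?_⟩
  ext p
  simp [TwoSidedIdeal.span_le]

lemma exists_pos_eventually_lt_norm_sub {b : A} {p₀ : PrimIdeal A} (hb : b ∉ p₀.1) :
    ∃ ε > 0, ∀ᶠ p in 𝓝 p₀, ∀ x ∈ p.1, ε < ‖b - x‖ := by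
  obtain ⟨H, _, _, _, π₀, -, -, hker₀⟩ := p₀.2
  have hπ₀b : 0 < ‖π₀ b‖ := norm_pos_iff.mpr fun h => hb ((hker₀ b).mpr h)
  set ε := ‖π₀ b‖ / 2
  have hε : 0 < ε := by positivity
  set c := cfcₙ (fun t : ℝ => max (t - ε ^ 2) 0) (star b * b)
  have hc : c ∉ p₀.1 := by
    rw [hker₀, π₀.map_cfcₙ_max_sub_sq_eq_zero_iff b hε.le, not_le]
    exact half_lt_self hπ₀b
  refine ⟨ε, hε, ?_⟩
  filter_upwards [(isOpen_setOf_notMem c).mem_nhds hc] with p hp x hx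
  obtain ⟨H, _, _, _, π, -, -, hker⟩ := p.2
  rw [hker, π.map_cfcₙ_max_sub_sq_eq_zero_iff b hε.le, not_le] at hp
  calc ε < ‖π b‖ := hp
    _ = ‖π (b - x)‖ := by rw [map_sub, (hker x).mp hx, sub_zero]
    _ ≤ ‖b - x‖ := NonUnitalStarAlgHom.norm_apply_le π _

lemma continuous_of_eventually_notMem {X : Type*} [TopologicalSpace X] {f : X → PrimIdeal A}
    (h : ∀ x₀ a, a ∉ (f x₀).1 → ∀ᶠ x in 𝓝 x₀, a ∉ (f x).1) : Continuous f := by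
  refine continuous_generateFrom_iff.mpr ?_
  rintro - ⟨I, rfl⟩
  refine isOpen_iff_mem_nhds.mpr fun x₀ hI => ?_
  obtain ⟨a, haI, ha⟩ := SetLike.not_le_iff_exists.mp hI
  filter_upwards [h x₀ a ha] with x hx hle using hx (hle haI)

end PrimIdeal

theorem primIdeal_action_continuous_general {G : Type*} [TopologicalSpace G]
    {A : Type u} [NonUnitalCStarAlgebra A]
    (α : G → A ≃⋆ₐ[ℂ] A)
    (hcont : ∀ a : A, Continuous fun g => α g a)
    (F : G → PrimIdeal A → PrimIdeal A)
    (hF : ∀ g p, ((F g p).1 : Set A) = (α g) '' (p.1 : Set A)) :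
    ∀ U : Set (PrimIdeal A), IsOpen U →
      IsOpen {x : G × PrimIdeal A | F x.1 x.2 ∈ U} := by
  suffices Continuous fun x : G × PrimIdeal A => F x.1 x.2 from fun U hU => hU.preimage this
  refine PrimIdeal.continuous_of_eventually_notMem ?_
  rintro ⟨g₀, p₀⟩ a ha
  set b := (α g₀).symm a
  have hb : b ∉ p₀.1 := fun hb => ha <| by
    change a ∈ ((F g₀ p₀).1 : Set A)
    exact hF g₀ p₀ ▸ ⟨b, hb, (α g₀).apply_symm_apply a⟩
  obtain ⟨ε, hε, hp⟩ := PrimIdeal.exists_pos_eventually_lt_norm_sub hb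
  have hg : ∀ᶠ g in 𝓝 g₀, ‖α g b - a‖ < ε := by
    have : Tendsto (fun g => α g b) (𝓝 g₀) (𝓝 a) := by simpa [b] using (hcont b).tendsto g₀
    simpa [dist_eq_norm] using Metric.tendsto_nhds.mp this ε hε
  rw [nhds_prod_eq]
  filter_upwards [hg.prod_mk hp]
  rintro ⟨g, p⟩ ⟨hg, hp⟩ ha
  obtain ⟨x, hx, rfl⟩ : a ∈ α g '' p.1 := hF g p ▸ ha
  have := hp x hx
  rw [← StarAlgEquiv.norm_map (α g), map_sub] at this
  exact lt_asymm hg this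

/-- For a strongly continuous action `α` of a topological group `G` on a C*-algebra `A`, the
induced action `α♯` on `Prim(A)`, `α♯_g(p) = α_g(p)`, is jointly continuous for the Jacobson
topology. -/
theorem primIdeal_action_continuous {G : Type*} [Group G] [TopologicalSpace G]
    [IsTopologicalGroup G] {A : Type u} [NonUnitalCStarAlgebra A]
    (α : G → A ≃⋆ₐ[ℂ] A)
    (hα1 : α 1 = StarAlgEquiv.refl ℂ A)
    (hαmul : ∀ g h a, α (g * h) a = α g (α h a))
    (hcont : ∀ a : A, Continuous fun g => α g a)
    (F : G → PrimIdeal A → PrimIdeal A)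
    (hF : ∀ g p, ((F g p).1 : Set A) = (α g) '' (p.1 : Set A)) :
    ∀ U : Set (PrimIdeal A), IsOpen U →
      IsOpen {x : G × PrimIdeal A | F x.1 x.2 ∈ U} :=
  primIdeal_action_continuous_general α hcont F hF
end

section
/- Let β : G ↷ B be an action on a unital C*-algebra B, and (φ, u), (ψ, v) : (A, α) → (B ⊗ K, β ⊗ id_K) proper cocycle morphisms landing in the corner B ⊗ e₁₁ (i.e., φ = κ∘φ₀, ψ = κ∘ψ₀ for unital φ₀, ψ₀ : A → B, where κ(b) = b ⊗ e₁₁). If (κ∘φ₀, u) and (κ∘ψ₀, v) are strongly asymptotically unitarily equivalent via a path v_t ∈ U(1 + B⊗K) with ‖[v_t, 1_B ⊗ e₁₁]‖ → 0, and the unitary group U(B) is connected, then (φ₀, u₀) and (ψ₀, v₀) are strongly asymptotically unitarily equivalent as proper cocycle morphisms into (B, β), where u₀, v₀ are the compressed cocycles; the witnessing path is obtained by compressing v_t by 1_B ⊗ e₁₁ and taking the unitary part of the polar decomposition. -/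
/-!
Compressing the path by the projection `P = κ 1` gives elements `b t` of `B` with
`κ (b t) = P (w t) P`. As `w t` is unitary and `‖[w t, P]‖ → 0`, the `b t` are asymptotically
unitary, so for large `t` the unitary part `b t |b t|⁻¹` of the polar decomposition is a unitary
depending continuously on `t` and asymptotic to `b t`. Since `P` is fixed by the action and
`κ (φ₀ a)`, `κ (u₀ g)` live in the corner, compressing the two limits satisfied by `w` yields the
same limits for `b`, up to errors bounded by `‖[w t, P]‖`, hence for the unitary parts. Finally
`U(B)` is connected and locally path connected, so a path inside `U(B)` from `1` to the unitary
part at a fixed time repairs the normalisation at `t = 0` without affecting the limits.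
-/

open Filter Topology Set

lemma isUnit_of_isUnit_mul_of_isUnit_mul {M : Type*} [Monoid M] {a b c : M} (h₁ : IsUnit (a * b))
    (h₂ : IsUnit (b * c)) : IsUnit b := by
  obtain ⟨U, hU⟩ := h₁
  obtain ⟨V, hV⟩ := h₂
  have hl : (↑U⁻¹ * a) * b = 1 := by rw [mul_assoc, ← hU, U.inv_mul]
  have hr : b * (c * ↑V⁻¹) = 1 := by rw [← mul_assoc, ← hV, V.mul_inv]
  exact ⟨⟨b, _, hr, left_inv_eq_right_inv hl hr ▸ hl⟩, rfl⟩

lemma exists_continuous_eventuallyEq {X : Type*} [TopologicalSpace X] [PathConnectedSpace X]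
    (x₀ : X) {f : ℝ → X} (hf : Continuous f) :
    ∃ g : ℝ → X, Continuous g ∧ g 0 = x₀ ∧ g =ᶠ[atTop] f := by
  let γ := PathConnectedSpace.somePath x₀ (f 1)
  refine ⟨fun t => if t ≤ 1 then γ.extend t else f t, ?_, by simp, ?_⟩
  · exact Continuous.if_le γ.continuous_extend hf continuous_id continuous_const
      fun t ht => by simp [ht]
  · filter_upwards [eventually_gt_atTop 1] with t ht
    simp [ht.not_ge]

lemma norm_mul_mul_le_of_norm_le_one {R : Type*} [NonUnitalSeminormedRing R] {a c : R}
    (ha : ‖a‖ ≤ 1) (hc : ‖c‖ ≤ 1) (x : R) : ‖a * x * c‖ ≤ ‖x‖ :=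
  calc ‖a * x * c‖ ≤ ‖a‖ * ‖x‖ * ‖c‖ := norm_mul₃_le
    _ ≤ 1 * ‖x‖ * 1 := by gcongr
    _ = ‖x‖ := by ring

-- A real `⨆` over an empty or unbounded family is `0`: hence the nonnegativity and the bound `M`.
lemma tendsto_biSup_zero_of_le_add {α ι : Type*} {l : Filter α} (K : Set ι) {f F : α → ι → ℝ}
    {e : α → ℝ} {M : ℝ} (hf : ∀ t g, 0 ≤ f t g) (hF : ∀ t g, 0 ≤ F t g) (hFM : ∀ t g, F t g ≤ M)
    (he : ∀ t, 0 ≤ e t) (hle : ∀ t, ∀ g ∈ K, f t g ≤ F t g + e t)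
    (hFlim : Tendsto (fun t => ⨆ g ∈ K, F t g) l (𝓝 0)) (helim : Tendsto e l (𝓝 0)) :
    Tendsto (fun t => ⨆ g ∈ K, f t g) l (𝓝 0) := by
  have hsup : ∀ t, ⨆ g ∈ K, f t g ≤ (⨆ g ∈ K, F t g) + e t := fun t => by
    have h0 : 0 ≤ (⨆ g ∈ K, F t g) + e t :=
      add_nonneg (Real.iSup_nonneg fun g => Real.iSup_nonneg fun _ => hF t g) (he t)
    refine Real.iSup_le (fun g => Real.iSup_le (fun hg => (hle t g hg).trans ?_) h0) h0
    gcongr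
    refine le_ciSup₂ (f := fun g (_ : g ∈ K) => F t g) ⟨M, ?_⟩ g hg
    simp only [upperBounds, mem_iUnion, mem_range]
    rintro _ ⟨g, _, rfl⟩
    exact hFM t g
  exact squeeze_zero (fun t => Real.iSup_nonneg fun g => Real.iSup_nonneg fun _ => hf t g)
    hsup (by simpa using hFlim.add helim)

section UnitaryPart

variable {B : Type*} [CStarAlgebra B]

lemma spectrum_subset_closedBall_norm_sub_one (a : B) :
    spectrum ℝ a ⊆ Metric.closedBall 1 ‖a - 1‖ := by
  nontriviality B
  intro x hx
  have := Set.sub_mem_sub hx (Set.mem_singleton (1 : ℝ))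
  rw [spectrum.sub_singleton_eq, map_one] at this
  simpa [dist_eq_norm] using spectrum.norm_le_norm_of_mem this

lemma spectrum_star_mul_self_subset_Ioi {b : B} (hb : IsUnit b) :
    spectrum ℝ (star b * b) ⊆ Ioi 0 := fun x hx =>
  (spectrum_star_mul_self_nonneg x hx).lt_of_ne fun h =>
    (spectrum.zero_notMem_iff ℝ).2 (hb.star.mul hb) (h ▸ hx)

lemma norm_le_one_of_mem_unitary {u : B} (hu : u ∈ unitary B) : ‖u‖ ≤ 1 := by
  simpa using (CStarRing.norm_mul_mem_unitary 1 hu).le.trans (IsStarProjection.one B).norm_le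

noncomputable def unitaryPart (b : B) : B := b * cfc (fun x : ℝ => (√x)⁻¹) (star b * b)

lemma unitaryPart_mem_unitary {b : B} (hb : IsUnit b) : unitaryPart b ∈ unitary B := by
  set s := star b * b
  set r := cfc (fun x : ℝ => (√x)⁻¹) s
  have hsa : IsSelfAdjoint s := .star_mul_self b
  have hs := spectrum_star_mul_self_subset_Ioi hb
  have hf : ContinuousOn (fun x : ℝ => (√x)⁻¹) (spectrum ℝ s) :=
    Real.continuous_sqrt.continuousOn.inv₀ fun x hx => (Real.sqrt_pos.2 (hs hx)).ne'
  have hrr : r * r * s = 1 := by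
    have : cfc (fun x : ℝ => (√x)⁻¹ * (√x)⁻¹ * x) s = r * r * s := by
      rw [cfc_mul (fun x : ℝ => (√x)⁻¹ * (√x)⁻¹) (fun x => x) s (hf.mul hf) (continuousOn_id' _),
        cfc_mul _ _ s hf hf, cfc_id' ℝ s]
    rw [← this, ← cfc_one ℝ s]
    refine cfc_congr fun x hx => ?_
    have := Real.sq_sqrt (hs hx).le
    field_simp [(Real.sqrt_pos.2 (hs hx)).ne']
    simpa [eq_comm] using this
  have hcomm : Commute r s := by
    have := cfc_commute_cfc (fun x : ℝ => (√x)⁻¹) (fun x => x) s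
    rwa [cfc_id' ℝ s hsa] at this
  obtain ⟨U, rfl⟩ := hb
  have hinv : r * r * star ↑U = ↑U⁻¹ :=
    left_inv_eq_right_inv (by simpa [s, mul_assoc] using hrr) U.mul_inv
  rw [Unitary.mem_iff, unitaryPart, star_mul, (cfc_predicate _ s : IsSelfAdjoint r).star_eq]
  constructor
  · calc r * star ↑U * (↑U * r) = r * s * r := by simp only [s, mul_assoc]
      _ = 1 := by rw [mul_assoc, ← hcomm.eq, ← mul_assoc, hrr]
  · calc ↑U * r * (r * star ↑U) = ↑U * (r * r * star ↑U) := by simp only [mul_assoc]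
      _ = 1 := by rw [hinv, U.mul_inv]

lemma Continuous.unitaryPart {X : Type*} [TopologicalSpace X] {b : X → B} (hb : Continuous b)
    (hunit : ∀ x, IsUnit (b x)) : Continuous fun x => unitaryPart (b x) := by
  have hf : ContinuousOn (fun x : ℝ => (√x)⁻¹) (Ioi 0) :=
    Real.continuous_sqrt.continuousOn.inv₀ fun x hx => (Real.sqrt_pos.2 hx).ne'
  refine hb.mul (Continuous.cfc_of_mem_nhdsSet _ ?_ (hb.star.mul hb)
    (fun x => .star_mul_self (b x)) hf)
  exact isOpen_Ioi.mem_nhdsSet.2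
    (iUnion_subset fun x => spectrum_star_mul_self_subset_Ioi (hunit x))

lemma tendsto_unitaryPart_sub {X : Type*} {l : Filter X} {b : X → B} (hb : ∀ x, ‖b x‖ ≤ 1)
    (h : Tendsto (fun x => star (b x) * b x) l (𝓝 1)) :
    Tendsto (fun x => unitaryPart (b x) - b x) l (𝓝 0) := by
  have hf : ContinuousOn (fun x : ℝ => (√x)⁻¹) (Metric.closedBall 1 2⁻¹) :=
    Real.continuous_sqrt.continuousOn.inv₀ fun x hx => by
      rw [Real.closedBall_eq_Icc] at hx
      exact (Real.sqrt_pos.2 (by linarith [hx.1])).ne'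
  have hspec : ∀ᶠ x in l, spectrum ℝ (star (b x) * b x) ⊆ Metric.closedBall 1 2⁻¹ := by
    have hball := Metric.closedBall_mem_nhds (1 : B) (by norm_num : (0 : ℝ) < 2⁻¹)
    filter_upwards [h.eventually hball] with x hx
    exact (spectrum_subset_closedBall_norm_sub_one _).trans
      (Metric.closedBall_subset_closedBall (by rwa [← dist_eq_norm]))
  have hcfc : Tendsto (fun x => cfc (fun x : ℝ => (√x)⁻¹) (star (b x) * b x)) l (𝓝 1) := by
    have h1 : cfc (fun x : ℝ => (√x)⁻¹) (1 : B) = 1 := by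
      rw [← map_one (algebraMap ℝ B), cfc_algebraMap]
      simp
    rw [← h1]
    exact h.cfc (isCompact_closedBall 1 2⁻¹) _ hspec (.of_forall fun x => .star_mul_self (b x))
      ((spectrum_subset_closedBall_norm_sub_one 1).trans (by simp)) (.one B) hf
  refine squeeze_zero_norm (fun x => ?_) (tendsto_iff_norm_sub_tendsto_zero.1 hcfc)
  rw [unitaryPart, ← mul_sub_one]
  exact (norm_mul_le _ _).trans (mul_le_of_le_one_left (norm_nonneg _) (hb x))

theorem exists_unitary_path_tendsto_sub (hU : IsConnected {x : B | x ∈ unitary B}) {b : ℝ → B}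
    (hb : Continuous b) (hbnorm : ∀ t, ‖b t‖ ≤ 1)
    (h₁ : Tendsto (fun t => star (b t) * b t) atTop (𝓝 1))
    (h₂ : Tendsto (fun t => b t * star (b t)) atTop (𝓝 1)) :
    ∃ w : ℝ → B, Continuous w ∧ w 0 = 1 ∧ (∀ t, w t ∈ unitary B) ∧
      Tendsto (fun t => w t - b t) atTop (𝓝 0) := by
  have hunit : ∀ᶠ t in atTop, IsUnit (b t) := by
    have := Units.isOpen.mem_nhds (isUnit_one (M := B))
    filter_upwards [h₁.eventually this, h₂.eventually this] with t ht₁ ht₂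
    exact isUnit_of_isUnit_mul_of_isUnit_mul ht₁ ht₂
  obtain ⟨T, hT⟩ := eventually_atTop.1 hunit
  -- freezing `b` before time `T` keeps it invertible
  have hcont : Continuous fun t => unitaryPart (b (max t T)) :=
    (hb.comp (continuous_id.max continuous_const)).unitaryPart fun t => hT _ (le_max_right t T)
  have : PathConnectedSpace (unitary B) :=
    pathConnectedSpace_iff_connectedSpace.2 (isConnected_iff_connectedSpace.1 hU)
  obtain ⟨g, hg, hg0, hgb⟩ := exists_continuous_eventuallyEq (1 : unitary B)
    (hcont.subtype_mk fun t => unitaryPart_mem_unitary (hT _ (le_max_right t T)))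
  refine ⟨fun t => g t, continuous_subtype_val.comp hg, by simp [hg0], fun t => (g t).2, ?_⟩
  refine (tendsto_unitaryPart_sub hbnorm h₁).congr' ?_
  filter_upwards [hgb, eventually_ge_atTop T] with t ht hTt
  simp [ht, max_eq_left hTt]

lemma norm_sub_le_two_of_mem_unitary {x y : B} (hx : x ∈ unitary B) (hy : y ∈ unitary B) :
    ‖x - y‖ ≤ 2 :=
  (norm_sub_le x y).trans <| by
    linarith [norm_le_one_of_mem_unitary hx, norm_le_one_of_mem_unitary hy]

lemma norm_mul_mul_map_star_sub_le (σ : B ≃⋆ₐ[ℂ] B) {w b : B} (hw : w ∈ unitary B) (hb : ‖b‖ ≤ 1)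
    (a : B) : ‖w * a * σ (star w) - b * a * σ (star b)‖ ≤ 2 * ‖w - b‖ * ‖a‖ :=
  calc ‖w * a * σ (star w) - b * a * σ (star b)‖
      = ‖(w - b) * a * σ (star w) + b * a * σ (star (w - b))‖ := by
        rw [star_sub, map_sub]; noncomm_ring
    _ ≤ ‖w - b‖ * ‖a‖ * ‖σ (star w)‖ + ‖b‖ * ‖a‖ * ‖σ (star (w - b))‖ :=
        norm_add_le_of_le norm_mul₃_le norm_mul₃_le
    _ ≤ ‖w - b‖ * ‖a‖ * 1 + 1 * ‖a‖ * ‖w - b‖ := by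
        rw [StarAlgEquiv.norm_map, StarAlgEquiv.norm_map, norm_star, norm_star]
        gcongr
        exact norm_le_one_of_mem_unitary hw
    _ = 2 * ‖w - b‖ * ‖a‖ := by ring

end UnitaryPart

section Corner

variable {B D : Type*} [CStarAlgebra B] [CStarAlgebra D] (ι : B →⋆ₙₐ[ℂ] D)

lemma isStarProjection_map_one : IsStarProjection (ι 1) := (IsStarProjection.one B).map ι

lemma map_mul_map_one_mul (x : B) (y : D) : ι x * (ι 1 * y) = ι x * y := by
  rw [← mul_assoc, ← map_mul, mul_one]

lemma map_one_mul_map (x : B) : ι 1 * ι x = ι x := by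
  rw [← map_mul, one_mul]

lemma map_mul_map_one (x : B) : ι x * ι 1 = ι x := by
  rw [← map_mul, mul_one]

variable {ι}

lemma one_add_map_sub_map_one_mem_unitary {x : B} (hx : x ∈ unitary B) :
    1 + ι x - ι 1 ∈ unitary D := by
  have hP := isStarProjection_map_one ι
  have h₁ : ι (star x) * ι x = ι 1 := by rw [← map_mul, Unitary.star_mul_self_of_mem hx]
  have h₂ : ι x * ι (star x) = ι 1 := by rw [← map_mul, Unitary.mul_star_self_of_mem hx]
  rw [Unitary.mem_iff, star_sub, star_add, star_one, ← map_star, hP.isSelfAdjoint.star_eq]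
  constructor <;>
  · simp only [mul_add, add_mul, mul_sub, sub_mul, one_mul, mul_one, h₁, h₂, map_one_mul_map,
      map_mul_map_one]
    abel

lemma continuous_of_map_eq {X : Type*} [TopologicalSpace X] (hι : Function.Injective ι)
    {w : X → D} (hw : Continuous w) {b : X → B} (hb : ∀ x, ι (b x) = ι 1 * w x * ι 1) :
    Continuous b := by
  have hiso := AddMonoidHomClass.isometry_of_norm ι (NonUnitalStarAlgHom.norm_map ι hι)
  rw [hiso.isEmbedding.continuous_iff, show ι ∘ b = fun x => ι 1 * w x * ι 1 from funext hb]
  fun_prop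

variable {w : D} {b : B}

lemma norm_le_one_of_map_eq (hι : Function.Injective ι) (hw : w ∈ unitary D)
    (hb : ι b = ι 1 * w * ι 1) : ‖b‖ ≤ 1 := by
  have hP := (isStarProjection_map_one ι).norm_le
  rw [← NonUnitalStarAlgHom.norm_map ι hι, hb]
  exact (norm_mul_mul_le_of_norm_le_one hP hP w).trans (norm_le_one_of_mem_unitary hw)

lemma norm_star_mul_self_sub_one_le_of_map_eq (hι : Function.Injective ι) (hw : w ∈ unitary D)
    (hb : ι b = ι 1 * w * ι 1) :
    ‖star b * b - 1‖ ≤ ‖w * ι 1 - ι 1 * w‖ := by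
  have hP := isStarProjection_map_one ι
  have hww : ∀ y, star w * (w * y) = y := fun y => by
    rw [← mul_assoc, Unitary.star_mul_self_of_mem hw, one_mul]
  have key : ι (star b * b - 1) = ι 1 * (star w * (ι 1 * w - w * ι 1)) * ι 1 := by
    rw [map_sub, map_mul, map_star, hb]
    simp only [star_mul, hP.isSelfAdjoint.star_eq, mul_sub, sub_mul, mul_assoc,
      map_mul_map_one_mul, hww, map_mul_map_one]
  rw [← NonUnitalStarAlgHom.norm_map ι hι, key, norm_sub_rev]
  refine (norm_mul_mul_le_of_norm_le_one hP.norm_le hP.norm_le _).trans_eq ?_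
  exact CStarRing.norm_mem_unitary_mul _ (Unitary.star_mem hw)

lemma norm_mul_star_self_sub_one_le_of_map_eq (hι : Function.Injective ι) (hw : w ∈ unitary D)
    (hb : ι b = ι 1 * w * ι 1) : ‖b * star b - 1‖ ≤ ‖w * ι 1 - ι 1 * w‖ := by
  have hP := isStarProjection_map_one ι
  have hb' : ι (star b) = ι 1 * star w * ι 1 := by
    rw [map_star, hb, star_mul, star_mul, hP.isSelfAdjoint.star_eq, mul_assoc]
  calc ‖b * star b - 1‖ = ‖star (star b) * star b - 1‖ := by rw [star_star]
    _ ≤ ‖star w * ι 1 - ι 1 * star w‖ :=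
      norm_star_mul_self_sub_one_le_of_map_eq hι (Unitary.star_mem hw) hb'
    _ = ‖w * ι 1 - ι 1 * w‖ := by
      rw [← norm_star, star_sub, star_mul, star_mul, star_star, hP.isSelfAdjoint.star_eq,
        norm_sub_rev]

lemma norm_mul_mul_star_sub_le_of_map_eq (hι : Function.Injective ι) (hb : ι b = ι 1 * w * ι 1)
    (a a' : B) : ‖b * a * star b - a'‖ ≤ ‖w * ι a * star w - ι a'‖ := by
  have hP := isStarProjection_map_one ι
  have key : ι (b * a * star b - a') = ι 1 * (w * ι a * star w - ι a') * ι 1 := by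
    rw [map_sub, map_mul, map_mul, map_star, hb]
    simp only [star_mul, hP.isSelfAdjoint.star_eq, mul_sub, sub_mul, mul_assoc,
      map_mul_map_one_mul, map_mul_map_one, map_one_mul_map]
  rw [← NonUnitalStarAlgHom.norm_map ι hι, key]
  exact norm_mul_mul_le_of_norm_le_one hP.norm_le hP.norm_le _

lemma norm_sub_mul_mul_map_star_le_of_map_eq (hι : Function.Injective ι) (hw : w ∈ unitary D)
    (hb : ι b = ι 1 * w * ι 1) {θ : D ≃⋆ₐ[ℂ] D} {β : B ≃⋆ₐ[ℂ] B} (hθ : ∀ x, θ (ι x) = ι (β x))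
    (u₀ v₀ : B) :
    ‖v₀ - b * u₀ * β (star b)‖ ≤
      ‖(1 + ι v₀ - ι 1) - w * (1 + ι u₀ - ι 1) * star (θ w)‖ + ‖w * ι 1 - ι 1 * w‖ := by
  have hP := isStarProjection_map_one ι
  set w' := star (θ w)
  have hθP : θ (ι 1) = ι 1 := hθ 1 |>.trans (by rw [map_one])
  have hcomm : ‖w' * ι 1 - ι 1 * w'‖ = ‖w * ι 1 - ι 1 * w‖ := by
    rw [show w' * ι 1 - ι 1 * w' = θ (star (ι 1 * w - w * ι 1)) by
      simp [w', star_sub, star_mul, hP.isSelfAdjoint.star_eq, hθP, map_star], StarAlgEquiv.norm_map,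
      norm_star, norm_sub_rev]
  -- `(1 - ι 1) * w' * ι 1 = (1 - ι 1) * [w', ι 1]`: compressing costs one commutator
  have key : ι (v₀ - b * u₀ * β (star b)) =
      ι 1 * ((1 + ι v₀ - ι 1) - w * (1 + ι u₀ - ι 1) * w') * ι 1 +
        ι 1 * (w * ((1 - ι 1) * (w' * ι 1 - ι 1 * w'))) * ι 1 := by
    rw [map_sub, map_mul, map_mul, ← hθ, map_star, hb]
    simp only [w', star_mul, hP.isSelfAdjoint.star_eq, map_mul, hθP, map_star, mul_add, add_mul,
      mul_sub, sub_mul, mul_assoc, one_mul, mul_one, map_mul_map_one_mul,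
      map_mul_map_one, map_one_mul_map]
    abel
  rw [← NonUnitalStarAlgHom.norm_map ι hι, key]
  refine (norm_add_le _ _).trans (add_le_add
    (norm_mul_mul_le_of_norm_le_one hP.norm_le hP.norm_le _) ?_)
  refine (norm_mul_mul_le_of_norm_le_one hP.norm_le hP.norm_le _).trans ?_
  rw [CStarRing.norm_mem_unitary_mul _ hw, ← hcomm]
  exact norm_mul_le_of_le hP.one_sub.norm_le le_rfl |>.trans_eq (one_mul _)

end Corner

lemma exists_inr_eq_mul_mul {B C : Type*} [CStarAlgebra B] [NonUnitalCStarAlgebra C]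
    (κ : B →⋆ₙₐ[ℂ] C) (hcorner : ∀ c : C, κ 1 * c * κ 1 ∈ range κ) (x : Unitization ℂ C) :
    ∃ b : B, (κ b : Unitization ℂ C) = κ 1 * x * κ 1 := by
  obtain ⟨y, hy⟩ := hcorner x.snd
  refine ⟨x.fst • (1 : B) + y, ?_⟩
  ext
  · simp
  · simp [hy, add_mul, smul_mul_assoc, ← map_mul]

section Transfer

variable {B D X : Type*} [CStarAlgebra B] [CStarAlgebra D] {ι : B →⋆ₙₐ[ℂ] D} {l : Filter X}
  {w : X → D} {b w₀ : X → B}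

lemma tendsto_mul_mul_star_of_map_eq (hι : Function.Injective ι)
    (hb : ∀ t, ι (b t) = ι 1 * w t * ι 1) (hbn : ∀ t, ‖b t‖ ≤ 1) (hw₀ : ∀ t, w₀ t ∈ unitary B)
    (hw₀b : Tendsto (fun t => w₀ t - b t) l (𝓝 0)) {a a' : B}
    (h : Tendsto (fun t => w t * ι a * star (w t)) l (𝓝 (ι a'))) :
    Tendsto (fun t => w₀ t * a * star (w₀ t)) l (𝓝 a') := by
  rw [tendsto_iff_norm_sub_tendsto_zero] at h ⊢
  refine squeeze_zero (fun _ => norm_nonneg _) (fun t =>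
    (norm_sub_le_norm_sub_add_norm_sub _ (b t * a * star (b t)) _).trans (add_le_add
      (norm_mul_mul_map_star_sub_le (.refl ℂ B) (hw₀ t) (hbn t) a)
      (norm_mul_mul_star_sub_le_of_map_eq hι (hb t) _ _))) ?_
  simpa using ((hw₀b.norm.const_mul 2).mul_const ‖a‖).add h

lemma tendsto_biSup_norm_sub_mul_mul_map_star_of_map_eq {G : Type*} (hι : Function.Injective ι)
    {θ : G → D ≃⋆ₐ[ℂ] D} {β : G → B ≃⋆ₐ[ℂ] B} (hθ : ∀ g x, θ g (ι x) = ι (β g x))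
    (hw : ∀ t, w t ∈ unitary D) (hb : ∀ t, ι (b t) = ι 1 * w t * ι 1) (hbn : ∀ t, ‖b t‖ ≤ 1)
    (hw₀ : ∀ t, w₀ t ∈ unitary B) (hw₀b : Tendsto (fun t => w₀ t - b t) l (𝓝 0))
    (hc : Tendsto (fun t => ‖w t * ι 1 - ι 1 * w t‖) l (𝓝 0)) {u₀ v₀ : G → B}
    (hu₀ : ∀ g, u₀ g ∈ unitary B) (hv₀ : ∀ g, v₀ g ∈ unitary B) (K : Set G)
    (h : Tendsto (fun t => ⨆ g ∈ K,
      ‖(1 + ι (v₀ g) - ι 1) - w t * (1 + ι (u₀ g) - ι 1) * star (θ g (w t))‖) l (𝓝 0)) :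
    Tendsto (fun t => ⨆ g ∈ K, ‖v₀ g - w₀ t * u₀ g * β g (star (w₀ t))‖) l (𝓝 0) := by
  refine tendsto_biSup_zero_of_le_add K (M := 2) (fun _ _ => norm_nonneg _)
    (fun _ _ => norm_nonneg _)
    (fun t g => norm_sub_le_two_of_mem_unitary (one_add_map_sub_map_one_mem_unitary (hv₀ g))
      (mul_mem (mul_mem (hw t) (one_add_map_sub_map_one_mem_unitary (hu₀ g)))
        (Unitary.star_mem (Unitary.map_mem _ (hw t)))))
    (e := fun t => 2 * ‖w₀ t - b t‖ + ‖w t * ι 1 - ι 1 * w t‖) (fun t => by positivity)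
    (fun t g _ => ?_) h (by simpa using (hw₀b.norm.const_mul 2).add hc)
  have h₁ := norm_sub_mul_mul_map_star_le_of_map_eq hι (hw t) (hb t) (hθ g) (u₀ g) (v₀ g)
  have h₂ := norm_mul_mul_map_star_sub_le (β g) (hw₀ t) (hbn t) (u₀ g)
  have h₃ := norm_le_one_of_mem_unitary (hu₀ g)
  rw [norm_sub_rev] at h₂
  calc _ ≤ ‖v₀ g - b t * u₀ g * β g (star (b t))‖ + 2 * ‖w₀ t - b t‖ * ‖u₀ g‖ :=
        (norm_sub_le_norm_sub_add_norm_sub _ _ _).trans (add_le_add_right h₂ _)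
    _ ≤ _ := by nlinarith [norm_nonneg (w₀ t - b t)]

end Transfer

theorem compress_strong_asymptotic_unitary_equivalence_general
    {G : Type*} [TopologicalSpace G]
    {A : Type*} [CStarAlgebra A] {B : Type*} [CStarAlgebra B]
    {C : Type*} [NonUnitalCStarAlgebra C]
    -- actions on `A`, `B` and on `C = B ⊗ K` (`γ = β ⊗ id_K`)
    (β : G → B ≃⋆ₐ[ℂ] B) (γ : G → C ≃⋆ₐ[ℂ] C)
    -- `κ(b) = b ⊗ e₁₁`: an equivariant embedding of `B` onto the corner `κ(1) C κ(1)`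
    (κ : B →⋆ₙₐ[ℂ] C) (hκinj : Function.Injective κ)
    (hκequiv : ∀ g b, κ (β g b) = γ g (κ b))
    (hcorner : ∀ c : C, κ 1 * c * κ 1 ∈ Set.range κ)
    -- the extension of `γ` to the unitization `1 + C`
    (γU : G → Unitization ℂ C ≃⋆ₐ[ℂ] Unitization ℂ C)
    (hγUγ : ∀ (g : G) (c : C), γU g (c : Unitization ℂ C) = ((γ g c : C) : Unitization ℂ C))
    -- the unital morphisms `φ₀, ψ₀ : A → B` and the compressed cocycles `u₀, v₀`
    (φ₀ ψ₀ : A →⋆ₙₐ[ℂ] B)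
    (u₀ v₀ : G → B)
    (hu₀un : ∀ g, u₀ g ∈ unitary B) (hv₀un : ∀ g, v₀ g ∈ unitary B)
    -- the induced proper cocycle morphisms `(κ∘φ₀, u)`, `(κ∘ψ₀, v)` into `(C, γ)`
    (u v : G → Unitization ℂ C)
    (hu : ∀ g, u g = 1 + ((κ (u₀ g) : C) : Unitization ℂ C) - ((κ 1 : C) : Unitization ℂ C))
    (hv : ∀ g, v g = 1 + ((κ (v₀ g) : C) : Unitization ℂ C) - ((κ 1 : C) : Unitization ℂ C))
    -- the witnessing path of the strong asymptotic unitary equivalence of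
    -- `(κ∘φ₀, u)` and `(κ∘ψ₀, v)` in `U(1 + B ⊗ K)`
    (w : ℝ → Unitization ℂ C)
    (hwcont : Continuous w)
    (hwun : ∀ t, w t ∈ unitary (Unitization ℂ C) ∧ (w t).fst = 1)
    (hwconv : ∀ a : A, Filter.Tendsto
      (fun t => w t * ((κ (φ₀ a) : C) : Unitization ℂ C) * star (w t))
      Filter.atTop (nhds ((κ (ψ₀ a) : C) : Unitization ℂ C)))
    (hwcoc : ∀ K : Set G, IsCompact K → Filter.Tendsto
      (fun t => ⨆ g ∈ K, ‖v g - w t * u g * star (γU g (w t))‖) Filter.atTop (nhds 0))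
    -- the path asymptotically commutes with `1_B ⊗ e₁₁ = κ(1)`
    (hwcomm : Filter.Tendsto
      (fun t => ‖w t * ((κ 1 : C) : Unitization ℂ C) - ((κ 1 : C) : Unitization ℂ C) * w t‖)
      Filter.atTop (nhds 0))
    -- the unitary group of `B` is connected
    (hUB : IsConnected {x : B | x ∈ unitary B}) :
    -- conclusion: `(φ₀, u₀)` and `(ψ₀, v₀)` are strongly asymptotically unitarily
    -- equivalent as proper cocycle morphisms into `(B, β)`
    ∃ w₀ : ℝ → B, Continuous w₀ ∧ w₀ 0 = 1 ∧ (∀ t, w₀ t ∈ unitary B) ∧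
      (∀ a : A, Filter.Tendsto (fun t => w₀ t * φ₀ a * star (w₀ t))
        Filter.atTop (nhds (ψ₀ a))) ∧
      ∀ K : Set G, IsCompact K → Filter.Tendsto
        (fun t => ⨆ g ∈ K, ‖v₀ g - w₀ t * u₀ g * β g (star (w₀ t))‖)
        Filter.atTop (nhds 0) := by
  let ι := (Unitization.inrNonUnitalStarAlgHom ℂ C).comp κ
  have hι : Function.Injective ι := Unitization.inr_injective.comp hκinj
  have hθ : ∀ g x, γU g (ι x) = ι (β g x) := fun g x => by simp [ι, hγUγ, hκequiv]
  obtain rfl : u = fun g => 1 + ι (u₀ g) - ι 1 := funext hu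
  obtain rfl : v = fun g => 1 + ι (v₀ g) - ι 1 := funext hv
  have hc : Tendsto (fun t => ‖w t * ι 1 - ι 1 * w t‖) atTop (𝓝 0) := hwcomm
  choose b hb using fun t => exists_inr_eq_mul_mul κ hcorner (w t)
  replace hb : ∀ t, ι (b t) = ι 1 * w t * ι 1 := hb
  have hbn := fun t => norm_le_one_of_map_eq hι (hwun t).1 (hb t)
  obtain ⟨w₀, hw₀c, hw₀0, hw₀u, hw₀b⟩ := exists_unitary_path_tendsto_sub hUB
    (continuous_of_map_eq hι hwcont hb) hbn
    (tendsto_iff_norm_sub_tendsto_zero.2 <| squeeze_zero (fun _ => norm_nonneg _)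
      (fun t => norm_star_mul_self_sub_one_le_of_map_eq hι (hwun t).1 (hb t)) hc)
    (tendsto_iff_norm_sub_tendsto_zero.2 <| squeeze_zero (fun _ => norm_nonneg _)
      (fun t => norm_mul_star_self_sub_one_le_of_map_eq hι (hwun t).1 (hb t)) hc)
  exact ⟨w₀, hw₀c, hw₀0, hw₀u,
    fun a => tendsto_mul_mul_star_of_map_eq hι hb hbn hw₀u hw₀b (hwconv a),
    fun K hK => tendsto_biSup_norm_sub_mul_mul_map_star_of_map_eq hι hθ (fun t => (hwun t).1)
      hb hbn hw₀u hw₀b hc hu₀un hv₀un K (hwcoc K hK)⟩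

/-- Compression of a strong asymptotic unitary equivalence to a corner: if two proper cocycle
morphisms into `B ⊗ K` landing in the corner `B ⊗ e₁₁` (realized by `κ : B → C`, `C = B ⊗ K`)
are strongly asymptotically unitarily equivalent via a path asymptotically commuting with
`1_B ⊗ e₁₁ = κ(1)`, and the unitary group of `B` is connected, then the compressed unital
morphisms into `B` are strongly asymptotically unitarily equivalent. -/
theorem compress_strong_asymptotic_unitary_equivalence
    {G : Type*} [Group G] [TopologicalSpace G] [IsTopologicalGroup G]
    {A : Type*} [CStarAlgebra A] {B : Type*} [CStarAlgebra B]
    {C : Type*} [NonUnitalCStarAlgebra C]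
    -- actions on `A`, `B` and on `C = B ⊗ K` (`γ = β ⊗ id_K`)
    (αA : G → A ≃⋆ₐ[ℂ] A) (β : G → B ≃⋆ₐ[ℂ] B) (γ : G → C ≃⋆ₐ[ℂ] C)
    (hα1 : αA 1 = StarAlgEquiv.refl ℂ A) (hαmul : ∀ g h a, αA (g * h) a = αA g (αA h a))
    (hβ1 : β 1 = StarAlgEquiv.refl ℂ B) (hβmul : ∀ g h b, β (g * h) b = β g (β h b))
    (hγ1 : γ 1 = StarAlgEquiv.refl ℂ C) (hγmul : ∀ g h c, γ (g * h) c = γ g (γ h c))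
    -- `κ(b) = b ⊗ e₁₁`: an equivariant embedding of `B` onto the corner `κ(1) C κ(1)`
    (κ : B →⋆ₙₐ[ℂ] C) (hκinj : Function.Injective κ)
    (hκequiv : ∀ g b, κ (β g b) = γ g (κ b))
    (hcorner : ∀ c : C, κ 1 * c * κ 1 ∈ Set.range κ)
    -- the extension of `γ` to the unitization `1 + C`
    (γU : G → Unitization ℂ C ≃⋆ₐ[ℂ] Unitization ℂ C)
    (hγU1 : γU 1 = StarAlgEquiv.refl ℂ (Unitization ℂ C))
    (hγUmul : ∀ g h x, γU (g * h) x = γU g (γU h x))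
    (hγUγ : ∀ (g : G) (c : C), γU g (c : Unitization ℂ C) = ((γ g c : C) : Unitization ℂ C))
    -- the unital morphisms `φ₀, ψ₀ : A → B` and the compressed cocycles `u₀, v₀`
    (φ₀ ψ₀ : A →⋆ₙₐ[ℂ] B) (hφ₀1 : φ₀ 1 = 1) (hψ₀1 : ψ₀ 1 = 1)
    (u₀ v₀ : G → B)
    (hu₀un : ∀ g, u₀ g ∈ unitary B) (hv₀un : ∀ g, v₀ g ∈ unitary B)
    (hu₀cont : Continuous u₀) (hv₀cont : Continuous v₀)
    (hu₀coc : ∀ g h, u₀ (g * h) = u₀ g * β g (u₀ h))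
    (hv₀coc : ∀ g h, v₀ (g * h) = v₀ g * β g (v₀ h))
    (hφ₀equiv : ∀ g a, φ₀ (αA g a) = u₀ g * β g (φ₀ a) * star (u₀ g))
    (hψ₀equiv : ∀ g a, ψ₀ (αA g a) = v₀ g * β g (ψ₀ a) * star (v₀ g))
    -- the induced proper cocycle morphisms `(κ∘φ₀, u)`, `(κ∘ψ₀, v)` into `(C, γ)`
    (u v : G → Unitization ℂ C)
    (hu : ∀ g, u g = 1 + ((κ (u₀ g) : C) : Unitization ℂ C) - ((κ 1 : C) : Unitization ℂ C))
    (hv : ∀ g, v g = 1 + ((κ (v₀ g) : C) : Unitization ℂ C) - ((κ 1 : C) : Unitization ℂ C))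
    -- the witnessing path of the strong asymptotic unitary equivalence of
    -- `(κ∘φ₀, u)` and `(κ∘ψ₀, v)` in `U(1 + B ⊗ K)`
    (w : ℝ → Unitization ℂ C)
    (hwcont : Continuous w) (hw0 : w 0 = 1)
    (hwun : ∀ t, w t ∈ unitary (Unitization ℂ C) ∧ (w t).fst = 1)
    (hwconv : ∀ a : A, Filter.Tendsto
      (fun t => w t * ((κ (φ₀ a) : C) : Unitization ℂ C) * star (w t))
      Filter.atTop (nhds ((κ (ψ₀ a) : C) : Unitization ℂ C)))
    (hwcoc : ∀ K : Set G, IsCompact K → Filter.Tendsto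
      (fun t => ⨆ g ∈ K, ‖v g - w t * u g * star (γU g (w t))‖) Filter.atTop (nhds 0))
    -- the path asymptotically commutes with `1_B ⊗ e₁₁ = κ(1)`
    (hwcomm : Filter.Tendsto
      (fun t => ‖w t * ((κ 1 : C) : Unitization ℂ C) - ((κ 1 : C) : Unitization ℂ C) * w t‖)
      Filter.atTop (nhds 0))
    -- the unitary group of `B` is connected
    (hUB : IsConnected {x : B | x ∈ unitary B}) :
    -- conclusion: `(φ₀, u₀)` and `(ψ₀, v₀)` are strongly asymptotically unitarily
    -- equivalent as proper cocycle morphisms into `(B, β)`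
    ∃ w₀ : ℝ → B, Continuous w₀ ∧ w₀ 0 = 1 ∧ (∀ t, w₀ t ∈ unitary B) ∧
      (∀ a : A, Filter.Tendsto (fun t => w₀ t * φ₀ a * star (w₀ t))
        Filter.atTop (nhds (ψ₀ a))) ∧
      ∀ K : Set G, IsCompact K → Filter.Tendsto
        (fun t => ⨆ g ∈ K, ‖v₀ g - w₀ t * u₀ g * β g (star (w₀ t))‖)
        Filter.atTop (nhds 0) :=
  compress_strong_asymptotic_unitary_equivalence_general β γ κ hκinj hκequiv hcorner γU hγUγ φ₀ ψ₀
    u₀ v₀ hu₀un hv₀un u v hu hv w hwcont hwun hwconv hwcoc hwcomm hUB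
end
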